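/- arXiv:2401.15375 — 2 statements merged into one kernel-verified Lean document; each statement's English description precedes it below -/
import Mathlib

section
/- There exists a positive number s > 0 such that for every (x,y) in the region Ê₁ = {(x,y) : k ≤ x ≤ û₁, y < ŵ₁}, at least one of the following three conditions holds: ȳ − y ≥ s, or f(x,y) ∉ Ê₁, or ȳ̄ − ȳ ≥ s, where (x̄, ȳ) := f(x,y) and (x̄̄, ȳ̄) := f(x̄, ȳ). -/
/-!
Since `x² e^{-x} ≤ 4/e²` for `x ≥ 0`, the first coordinate of the image of a point of `Ê₁`
is at most `u' = (4/e²) e^{ŵ₁} + k`, and `u' < û₁` because `ŵ₁ < v̂`. If the image `(x̄, ȳ)`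
stays in `Ê₁`, then `ȳ < ŵ₁`, and `(1 - a) ŵ₁ = c - b û₁` gives
`ȳ̄ - ȳ = (1 - a)(ŵ₁ - ȳ) + b (û₁ - x̄) ≥ b (û₁ - u') > 0`.
-/

open Real

lemma sq_mul_exp_neg_le {x : ℝ} (hx : 0 ≤ x) : x ^ 2 * exp (-x) ≤ 4 / exp 2 := by
  have half_le : x / 2 ≤ exp (x / 2 - 1) := by linarith [add_one_le_exp (x / 2 - 1)]
  have sq_le : x ^ 2 ≤ 4 * exp (x - 2) := by
    calc x ^ 2 = 4 * (x / 2) ^ 2 := by ring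
      _ ≤ 4 * exp (x / 2 - 1) ^ 2 := by gcongr
      _ = 4 * exp (x - 2) := by rw [← exp_nat_mul]; ring_nf
  calc x ^ 2 * exp (-x) ≤ 4 * exp (x - 2) * exp (-x) := by gcongr
    _ = 4 / exp 2 := by
        rw [mul_assoc, ← exp_add, show x - 2 + -x = -2 by ring, exp_neg, div_eq_mul_inv]

lemma sq_mul_exp_sub_le_of_le {x y w : ℝ} (hx : 0 ≤ x) (hy : y ≤ w) :
    x ^ 2 * exp (y - x) ≤ 4 / exp 2 * exp w := by
  calc x ^ 2 * exp (y - x) = x ^ 2 * exp (-x) * exp y := by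
        rw [mul_assoc, ← exp_add, sub_eq_neg_add]
    _ ≤ 4 / exp 2 * exp w := by gcongr; exact sq_mul_exp_neg_le hx

lemma le_snd_increment {a b c u u' w x y : ℝ} (ha : a < 1) (hb : 0 ≤ b)
    (hw : (1 - a) * w = c - b * u) (hx : x ≤ u') (hy : y ≤ w) :
    b * (u - u') ≤ a * y - b * x + c - y :=
  calc b * (u - u') ≤ (1 - a) * (w - y) + b * (u - x) := by
        nlinarith [mul_nonneg (sub_nonneg.2 ha.le) (sub_nonneg.2 hy)]
    _ = a * y - b * x + c - y := by linear_combination hw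

theorem chialvo_regionE1_speed_general
    (a b c k : ℝ)
    (ha : a ∈ Set.Ioo (0:ℝ) 1) (hb : b ∈ Set.Ioo (0:ℝ) 1)
    (hk : 0 < k)
    (f : ℝ × ℝ → ℝ × ℝ)
    (hf : ∀ p : ℝ × ℝ,
      f p = (p.1 ^ 2 * Real.exp (p.2 - p.1) + k, a * p.2 - b * p.1 + c))
    (v u1 w1 : ℝ)
    (hv : v = (c - b * k) / (1 - a))
    (hu1 : u1 = 4 / Real.exp 2 * Real.exp v + k)
    (hw1 : w1 = (c - b * u1) / (1 - a))
    (E1 : Set (ℝ × ℝ))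
    (hE1 : E1 = {p : ℝ × ℝ | k ≤ p.1 ∧ p.1 ≤ u1 ∧ p.2 < w1}) :
    ∃ s : ℝ, s > 0 ∧ ∀ p ∈ E1,
      (f p).2 - p.2 ≥ s ∨ f p ∉ E1 ∨ (f (f p)).2 - (f p).2 ≥ s := by
  obtain ⟨-, ha1⟩ := ha
  obtain ⟨hb0, -⟩ := hb
  have h1a : 0 < 1 - a := by linarith
  set u' := 4 / exp 2 * exp w1 + k
  have hku1 : k < u1 := by rw [hu1]; exact lt_add_of_pos_left k (by positivity)
  have hw1v : w1 < v := by rw [hw1, hv]; gcongr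
  have hu'u1 : u' < u1 := by rw [hu1]; simp only [u']; gcongr
  refine ⟨b * (u1 - u'), mul_pos hb0 (by linarith), fun p hp => ?_⟩
  by_cases hfp : f p ∈ E1
  · rw [hE1] at hp hfp
    obtain ⟨hkx, -, hy⟩ := hp
    obtain ⟨-, -, hfy⟩ := hfp
    have hfx : (f p).1 ≤ u' := by
      rw [hf p]; exact add_le_add_left (sq_mul_exp_sub_le_of_le (hk.le.trans hkx) hy.le) k
    have hw1eq : (1 - a) * w1 = c - b * u1 := by rw [hw1]; field_simp
    right; right
    rw [hf (f p)]
    exact le_snd_increment ha1 hb0.le hw1eq hfx hfy.le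
  · exact Or.inr (Or.inl hfp)

/-- Moving upward in region `Ê₁`: there is a uniform positive speed `s` such that
for every point of `Ê₁`, either `ȳ - y ≥ s`, or the image leaves `Ê₁`,
or `ȳ̄ - ȳ ≥ s`. -/
theorem chialvo_regionE1_speed
    (a b c k : ℝ)
    (ha : a ∈ Set.Ioo (0:ℝ) 1) (hb : b ∈ Set.Ioo (0:ℝ) 1)
    (hc : c ∈ Set.Ioo (0:ℝ) 1) (hk : 0 < k)
    (f : ℝ × ℝ → ℝ × ℝ)
    (hf : ∀ p : ℝ × ℝ,
      f p = (p.1 ^ 2 * Real.exp (p.2 - p.1) + k, a * p.2 - b * p.1 + c))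
    (v u1 w1 : ℝ)
    (hv : v = (c - b * k) / (1 - a))
    (hu1 : u1 = 4 / Real.exp 2 * Real.exp v + k)
    (hw1 : w1 = (c - b * u1) / (1 - a))
    (E1 : Set (ℝ × ℝ))
    (hE1 : E1 = {p : ℝ × ℝ | k ≤ p.1 ∧ p.1 ≤ u1 ∧ p.2 < w1}) :
    ∃ s : ℝ, s > 0 ∧ ∀ p ∈ E1,
      (f p).2 - p.2 ≥ s ∨ f p ∉ E1 ∨ (f (f p)).2 - (f p).2 ≥ s :=
  chialvo_regionE1_speed_general a b c k ha hb hk f hf v u1 w1 hv hu1 hw1 E1 hE1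
end

section
/- Let û₂ > k satisfy: for all x ≥ û₂, (c − b·k)/(1 − a) < x + ln((x − k)/x²), and set ŵ₂ := (c − b·û₂)/(1 − a). If (x,y) ∈ D̂₂ \ Ê₂ (that is, k ≤ x ≤ û₂ and ŵ₂ ≤ y ≤ v̂), then f(x,y) ∉ Ê₂. -/
/-!
`ŵ₂` is the fixed point of `y ↦ a y − b û₂ + c`. The second coordinate `a y − b x + c` of `f` is
nondecreasing in `y` and nonincreasing in `x`, so for `x ≤ û₂` and `y ≥ ŵ₂` it is at least its value
at `(û₂, ŵ₂)`, namely `ŵ₂`; hence `f(x, y)` lies on or above the line `y = ŵ₂`, outside `Ê₂`.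
-/

lemma fixedPoint_le_affine {a b c u x y : ℝ} (ha₀ : 0 ≤ a) (ha₁ : a ≠ 1) (hb : 0 ≤ b)
    (hx : x ≤ u) (hy : (c - b * u) / (1 - a) ≤ y) :
    (c - b * u) / (1 - a) ≤ a * y - b * x + c := by
  set w := (c - b * u) / (1 - a)
  have hfix : a * w - b * u + c = w := by
    have : 1 - a ≠ 0 := sub_ne_zero.mpr ha₁.symm
    simp only [w]
    field_simp
    ring
  calc w = a * w - b * u + c := hfix.symm
    _ ≤ a * y - b * x + c := by
      have := mul_le_mul_of_nonneg_left hy ha₀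
      have := mul_le_mul_of_nonneg_left hx hb
      linarith

theorem chialvo_no_return_E2_general
    (a b c k : ℝ)
    (ha : a ∈ Set.Ioo (0:ℝ) 1) (hb : b ∈ Set.Ioo (0:ℝ) 1)
    (f : ℝ × ℝ → ℝ × ℝ)
    (hf : ∀ p : ℝ × ℝ,
      f p = (p.1 ^ 2 * Real.exp (p.2 - p.1) + k, a * p.2 - b * p.1 + c))
    (v : ℝ)
    (u2 : ℝ)
    (w2 : ℝ) (hw2 : w2 = (c - b * u2) / (1 - a))
    (D2 E2 : Set (ℝ × ℝ))
    (hD2 : D2 = {p : ℝ × ℝ | k ≤ p.1 ∧ p.1 ≤ u2 ∧ p.2 ≤ v})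
    (hE2 : E2 = {p : ℝ × ℝ | k ≤ p.1 ∧ p.1 ≤ u2 ∧ p.2 < w2}) :
    ∀ p ∈ D2 \ E2, f p ∉ E2 := by
  subst hD2 hE2 hw2
  rintro ⟨x, y⟩ ⟨⟨hkx, hxu, -⟩, hpE⟩ hfE
  simp only [Set.mem_ofPred_eq, not_and, not_lt] at hpE
  rw [hf, Set.mem_ofPred_eq] at hfE
  exact hfE.2.2.not_ge (fixedPoint_le_affine ha.1.le ha.2.ne hb.1.le hxu (hpE hkx hxu))

/-- No return to region `Ê₂`: if `(x,y) ∈ D̂₂ \ Ê₂` then `f(x,y) ∉ Ê₂`. -/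
theorem chialvo_no_return_E2
    (a b c k : ℝ)
    (ha : a ∈ Set.Ioo (0:ℝ) 1) (hb : b ∈ Set.Ioo (0:ℝ) 1)
    (hc : c ∈ Set.Ioo (0:ℝ) 1) (hk : 0 < k)
    (f : ℝ × ℝ → ℝ × ℝ)
    (hf : ∀ p : ℝ × ℝ,
      f p = (p.1 ^ 2 * Real.exp (p.2 - p.1) + k, a * p.2 - b * p.1 + c))
    (v : ℝ) (hv : v = (c - b * k) / (1 - a))
    (u2 : ℝ) (hu2k : u2 > k)
    (hu2 : ∀ x ≥ u2, (c - b * k) / (1 - a) < x + Real.log ((x - k) / x ^ 2))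
    (w2 : ℝ) (hw2 : w2 = (c - b * u2) / (1 - a))
    (D2 E2 : Set (ℝ × ℝ))
    (hD2 : D2 = {p : ℝ × ℝ | k ≤ p.1 ∧ p.1 ≤ u2 ∧ p.2 ≤ v})
    (hE2 : E2 = {p : ℝ × ℝ | k ≤ p.1 ∧ p.1 ≤ u2 ∧ p.2 < w2}) :
    ∀ p ∈ D2 \ E2, f p ∉ E2 :=
  chialvo_no_return_E2_general a b c k ha hb f hf v u2 w2 hw2 D2 E2 hD2 hE2
end
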